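/- arXiv:1508.07498 — 4 statements merged into one kernel-verified Lean document; each statement's English description precedes it below -/
import Mathlib

section
/- For all real numbers r, σ, b with r > 1, σ > 7, and 0 < b < 4, the following three inequalities hold: (i) r − 1 > (b(b+σ−1)² − 4σ(b+σb−b²))/(3σ²); (ii) σ²(r−1)(b−4) < 4σ(σb+b−b²) − b(b+σ−1)²; (iii) σr > (b−σ)(b−1). -/
/-!
Writing `N = b(b+σ-1)² - 4σ(b+σb-b²)` for the common numerator of (i) and (ii), one has
`N = -b Q` with `Q = 3(σ² - 6σ - 3) + (4 - b)(6σ + b + 2)`, which is positive once `σ ≥ 7`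
and `0 ≤ b ≤ 4`. So for `0 < b < 4` the right-hand side of (i) is negative and that of (ii) is
positive, while the left-hand sides are positive and negative respectively since `r > 1`.
Inequality (iii) holds because `(b - σ)(b - 1) - σ = b(b - 1 - σ) < 0 < σ(r - 1)`.
-/

namespace Lorenz

lemma quadratic_pos {σ b : ℝ} (hσ : 7 ≤ σ) (hb0 : 0 ≤ b) (hb4 : b ≤ 4) :
    0 < 3 * σ ^ 2 - 6 * b * σ - b ^ 2 + 6 * σ + 2 * b - 1 := by
  have hσ6 : 0 < σ ^ 2 - 6 * σ - 3 := by nlinarith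
  have hb : 0 ≤ (4 - b) * (6 * σ + b + 2) := mul_nonneg (by linarith) (by linarith)
  linarith

lemma numerator_eq (σ b : ℝ) :
    b * (b + σ - 1) ^ 2 - 4 * σ * (b + σ * b - b ^ 2) =
      -(b * (3 * σ ^ 2 - 6 * b * σ - b ^ 2 + 6 * σ + 2 * b - 1)) := by
  ring

lemma numerator_neg {σ b : ℝ} (hσ : 7 ≤ σ) (hb0 : 0 < b) (hb4 : b ≤ 4) :
    b * (b + σ - 1) ^ 2 - 4 * σ * (b + σ * b - b ^ 2) < 0 := by
  rw [numerator_eq, neg_lt_zero]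
  exact mul_pos hb0 (quadratic_pos hσ hb0.le hb4)

lemma sub_mul_sub_one_lt_mul {σ b r : ℝ} (hσ : 0 < σ) (hb0 : 0 < b) (hbσ : b < σ + 1)
    (hr : 1 ≤ r) : (b - σ) * (b - 1) < σ * r := by
  have hσr : σ ≤ σ * r := le_mul_of_one_le_right hσ.le hr
  have hneg : b * (b - 1 - σ) < 0 := mul_neg_of_pos_of_neg hb0 (by linarith)
  linarith

end Lorenz

open Lorenz in
theorem stmt_2 (r σ b : ℝ) (hr : r > 1) (hσ : σ > 7) (hb0 : 0 < b) (hb4 : b < 4) :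
    r - 1 > (b * (b + σ - 1)^2 - 4 * σ * (b + σ * b - b^2)) / (3 * σ^2) ∧
    σ^2 * (r - 1) * (b - 4) < 4 * σ * (σ * b + b - b^2) - b * (b + σ - 1)^2 ∧
    σ * r > (b - σ) * (b - 1) := by
  have hσ0 : 0 < σ := by linarith
  have hN := numerator_neg hσ.le hb0 hb4.le
  refine ⟨?_, ?_, sub_mul_sub_one_lt_mul hσ0 hb0 (by linarith) hr.le⟩
  · have : (b * (b + σ - 1)^2 - 4 * σ * (b + σ * b - b^2)) / (3 * σ^2) < 0 :=
      div_neg_of_neg_of_pos hN (by positivity)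
    linarith
  · have hlhs : σ^2 * (r - 1) * (b - 4) < 0 :=
      mul_neg_of_pos_of_neg (by have := sub_pos.2 hr; positivity) (by linarith)
    linarith
end

section
/- Let σ, b, r be positive reals with σr + (σ−b)(b−1) > 0, let ρ = σ/√(σr + (σ−b)(b−1)), and fix real numbers x, y, z. Let A be the 3×3 real matrix with rows (b−σ−1, −σ/ρ, 0), (−σ/ρ + ρz, −b, −x), (−ρ(y + ((b−1)/σ)x), x, −b), and let M = (A + Aᵀ)/2 be its symmetric part. Then the characteristic polynomial of M equals (X + b)·(X² + (σ+1)X + b(σ−b+1) − (σ/ρ − ρz/2)² − (ρ(b−1)x/(2σ) + ρy/2)²); in particular, the eigenvalues of M are λ₂ = −b and λ_{1,3} = −(σ+1)/2 ± (1/2)·√((σ−2b+1)² + (2σ/ρ − ρz)² + ρ²(y + ((b−1)/σ)x)²). -/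
/-!
The symmetric part `M` of `A` is an arrowhead matrix `!![a, p, q; p, d, 0; q, 0, d]` whose two
trailing diagonal entries coincide (`d = -b`). Expanding the determinant, its characteristic
polynomial is `(X - d)` times the quadratic `X² - (a + d) X + (a d - p² - q²)`, whose discriminant
`(a - d)² + 4p² + 4q²` is a sum of squares; so all three eigenvalues are real and explicit.
-/

open Matrix Polynomial

theorem Matrix.charpoly_arrowhead_fin_three {R : Type*} [CommRing R] (a d p q : R) :
    (!![a, p, q; p, d, 0; q, 0, d] : Matrix (Fin 3) (Fin 3) R).charpoly =
      (X - C d) * (X ^ 2 - C (a + d) * X + C (a * d - p ^ 2 - q ^ 2)) := by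
  rw [Matrix.charpoly, Matrix.det_fin_three]
  simp only [Fin.isValue, charmatrix_apply_eq, of_apply, cons_val', cons_val_zero,
    cons_val_fin_one, cons_val_one, cons_val, ne_eq, Fin.reduceEq, not_false_eq_true,
    charmatrix_apply_ne, map_zero, neg_zero, mul_zero, sub_zero, mul_neg, neg_mul, neg_neg,
    zero_mul, add_zero, map_add, map_sub, map_mul, map_pow]
  ring

theorem Polynomial.isRoot_quadratic_iff {K : Type*} [Field K] [NeZero (2 : K)] {β γ s : K}
    (hs : β ^ 2 - 4 * γ = s * s) (μ : K) :
    (X ^ 2 - C β * X + C γ).IsRoot μ ↔ μ = (β + s) / 2 ∨ μ = (β - s) / 2 := by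
  have h := quadratic_eq_zero_iff one_ne_zero (b := -β) (c := γ) (by rw [discrim, ← hs]; ring) μ
  simpa [sq, sub_eq_add_neg] using h

theorem Matrix.spectrum_arrowhead_fin_three (a d p q : ℝ) :
    spectrum ℝ !![a, p, q; p, d, 0; q, 0, d] =
      {d, (a + d + √((a - d) ^ 2 + 4 * p ^ 2 + 4 * q ^ 2)) / 2,
        (a + d - √((a - d) ^ 2 + 4 * p ^ 2 + 4 * q ^ 2)) / 2} := by
  have hdisc : (a + d) ^ 2 - 4 * (a * d - p ^ 2 - q ^ 2) =
      √((a - d) ^ 2 + 4 * p ^ 2 + 4 * q ^ 2) * √((a - d) ^ 2 + 4 * p ^ 2 + 4 * q ^ 2) := by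
    rw [Real.mul_self_sqrt (by positivity)]
    ring
  ext μ
  rw [mem_spectrum_iff_isRoot_charpoly, charpoly_arrowhead_fin_three, root_mul, root_X_sub_C,
    isRoot_quadratic_iff hdisc]
  simp only [Set.mem_insert_iff, Set.mem_singleton_iff, eq_comm (a := d)]

open Matrix Polynomial in
theorem stmt_5_general (σ b r : ℝ) (x y z : ℝ) :
    let ρ := σ / Real.sqrt (σ * r + (σ - b) * (b - 1))
    let A : Matrix (Fin 3) (Fin 3) ℝ :=
      !![b - σ - 1, -σ / ρ, 0;
         -σ / ρ + ρ * z, -b, -x;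
         -ρ * (y + ((b - 1) / σ) * x), x, -b]
    let M : Matrix (Fin 3) (Fin 3) ℝ := (2 : ℝ)⁻¹ • (A + Aᵀ)
    M.charpoly =
      (X + C b) *
        (X^2 + C (σ + 1) * X +
          C (b * (σ - b + 1) - (σ / ρ - ρ * z / 2)^2
              - (ρ * (b - 1) * x / (2 * σ) + ρ * y / 2)^2)) ∧
    spectrum ℝ M =
      {-b,
       -(σ + 1) / 2 + (1 / 2) * Real.sqrt ((σ - 2 * b + 1)^2
          + (2 * σ / ρ - ρ * z)^2 + ρ^2 * (y + ((b - 1) / σ) * x)^2),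
       -(σ + 1) / 2 - (1 / 2) * Real.sqrt ((σ - 2 * b + 1)^2
          + (2 * σ / ρ - ρ * z)^2 + ρ^2 * (y + ((b - 1) / σ) * x)^2)} := by
  intro ρ A M
  have hM : M = !![b - σ - 1, -σ / ρ + ρ * z / 2, -(ρ * (y + (b - 1) / σ * x)) / 2;
      -σ / ρ + ρ * z / 2, -b, 0;
      -(ρ * (y + (b - 1) / σ * x)) / 2, 0, -b] := by
    ext i j
    fin_cases i <;> fin_cases j <;>
      simp only [M, A, Matrix.smul_apply, Matrix.add_apply, transpose_apply, of_apply, cons_val',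
        cons_val_zero, cons_val_one, cons_val, cons_val_fin_one, smul_eq_mul, Fin.isValue,
        Fin.zero_eta, Fin.mk_one, Fin.reduceFinMk] <;>
      ring
  have hdisc : (b - σ - 1 - -b) ^ 2 + 4 * (-σ / ρ + ρ * z / 2) ^ 2
      + 4 * (-(ρ * (y + (b - 1) / σ * x)) / 2) ^ 2 =
        (σ - 2 * b + 1) ^ 2 + (2 * σ / ρ - ρ * z) ^ 2 + ρ ^ 2 * (y + (b - 1) / σ * x) ^ 2 := by
    ring
  rw [hM, charpoly_arrowhead_fin_three, spectrum_arrowhead_fin_three, hdisc]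
  constructor
  · rw [show b - σ - 1 + -b = -(σ + 1) by ring, C_neg, C_neg, sub_neg_eq_add, neg_mul,
      sub_neg_eq_add]
    congr 3
    ring
  · congr 3 <;> ring

open Matrix Polynomial in
theorem stmt_5 (σ b r : ℝ) (hσ : 0 < σ) (hb : 0 < b) (hr : 0 < r)
    (hpos : σ * r + (σ - b) * (b - 1) > 0) (x y z : ℝ) :
    let ρ := σ / Real.sqrt (σ * r + (σ - b) * (b - 1))
    let A : Matrix (Fin 3) (Fin 3) ℝ :=
      !![b - σ - 1, -σ / ρ, 0;
         -σ / ρ + ρ * z, -b, -x;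
         -ρ * (y + ((b - 1) / σ) * x), x, -b]
    let M : Matrix (Fin 3) (Fin 3) ℝ := (2 : ℝ)⁻¹ • (A + Aᵀ)
    M.charpoly =
      (X + C b) *
        (X^2 + C (σ + 1) * X +
          C (b * (σ - b + 1) - (σ / ρ - ρ * z / 2)^2
              - (ρ * (b - 1) * x / (2 * σ) + ρ * y / 2)^2)) ∧
    spectrum ℝ M =
      {-b,
       -(σ + 1) / 2 + (1 / 2) * Real.sqrt ((σ - 2 * b + 1)^2
          + (2 * σ / ρ - ρ * z)^2 + ρ^2 * (y + ((b - 1) / σ) * x)^2),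
       -(σ + 1) / 2 - (1 / 2) * Real.sqrt ((σ - 2 * b + 1)^2
          + (2 * σ / ρ - ρ * z)^2 + ρ^2 * (y + ((b - 1) / σ) * x)^2)} :=
  stmt_5_general σ b r x y z
end

section
/- Let σ, b, r be positive reals with σr + (σ−b)(b−1) > 0, ρ = σ/√(σr + (σ−b)(b−1)), and let s ∈ [0,1]. For all real x, y, z, with λ₁ = (−(σ+1) + W)/2, λ₂ = −b, λ₃ = (−(σ+1) − W)/2, where W = √((σ−2b+1)² + (2σ/ρ − ρz)² + ρ²(y + ((b−1)/σ)x)²), the following inequality holds: 2(λ₁ + λ₂ + sλ₃) ≤ −(σ+2b+1) − s(σ+1) + (1−s)·√((σ−1)² + 4σr) + (2(1−s)/√((σ−1)² + 4σr))·(−σz + ρ²z²/4 + (ρ²/4)(y + ((b−1)/σ)x)²). -/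
theorem stmt_8 (σ b r : ℝ) (hσ : 0 < σ) (hb : 0 < b) (hr : 0 < r)
    (hpos : σ * r + (σ - b) * (b - 1) > 0) (s : ℝ) (hs0 : 0 ≤ s) (hs1 : s ≤ 1)
    (x y z : ℝ) :
    let ρ := σ / Real.sqrt (σ * r + (σ - b) * (b - 1))
    let W := Real.sqrt ((σ - 2 * b + 1)^2 + (2 * σ / ρ - ρ * z)^2
        + ρ^2 * (y + ((b - 1) / σ) * x)^2)
    let l1 := (-(σ + 1) + W) / 2
    let l2 := -b
    let l3 := (-(σ + 1) - W) / 2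
    2 * (l1 + l2 + s * l3) ≤
      -(σ + 2 * b + 1) - s * (σ + 1) + (1 - s) * Real.sqrt ((σ - 1)^2 + 4 * σ * r)
        + (2 * (1 - s) / Real.sqrt ((σ - 1)^2 + 4 * σ * r)) *
            (-σ * z + ρ^2 * z^2 / 4 + (ρ^2 / 4) * (y + ((b - 1) / σ) * x)^2) := by
  intro ρ W l1 l2 l3
  have hρ : ρ = σ / Real.sqrt (σ * r + (σ - b) * (b - 1)) := rfl
  have hWd : W = Real.sqrt ((σ - 2 * b + 1)^2 + (2 * σ / ρ - ρ * z)^2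
      + ρ^2 * (y + ((b - 1) / σ) * x)^2) := rfl
  have hl1 : l1 = (-(σ + 1) + W) / 2 := rfl
  have hl2 : l2 = -b := rfl
  have hl3 : l3 = (-(σ + 1) - W) / 2 := rfl
  clear_value ρ W l1 l2 l3
  have hE : (0:ℝ) < σ * r + (σ - b) * (b - 1) := hpos
  have hsE : 0 < Real.sqrt (σ * r + (σ - b) * (b - 1)) := Real.sqrt_pos.mpr hE
  have hsE2 : Real.sqrt (σ * r + (σ - b) * (b - 1)) ^ 2 = σ * r + (σ - b) * (b - 1) :=
    Real.sq_sqrt hE.le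
  have hA : (0:ℝ) < (σ - 1)^2 + 4 * σ * r := by nlinarith
  set A := (σ - 1)^2 + 4 * σ * r with hAdef
  have hsA : 0 < Real.sqrt A := Real.sqrt_pos.mpr hA
  have hsA2 : Real.sqrt A ^ 2 = A := Real.sq_sqrt hA.le
  set u := y + ((b - 1) / σ) * x with hu
  set Q := -σ * z + ρ^2 * z^2 / 4 + (ρ^2 / 4) * u^2 with hQ
  clear_value A u Q
  have h1 : 2 * σ / ρ = 2 * Real.sqrt (σ * r + (σ - b) * (b - 1)) := by
    rw [hρ]; field_simp
  have h2 : ρ * Real.sqrt (σ * r + (σ - b) * (b - 1)) = σ := by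
    rw [hρ]; field_simp
  have harg : (σ - 2 * b + 1)^2 + (2 * σ / ρ - ρ * z)^2 + ρ^2 * u^2 = A + 4 * Q := by
    rw [h1, hQ, hAdef]
    linear_combination 4 * hsE2 - 4 * z * h2
  have hargnn : 0 ≤ A + 4 * Q := by
    rw [← harg]; positivity
  have hW : W = Real.sqrt (A + 4 * Q) := by rw [hWd, ← harg]
  have hA2Q : 0 ≤ A + 2 * Q := by linarith
  have hkey : W ≤ (A + 2 * Q) / Real.sqrt A := by
    rw [hW]
    have h3 : A + 4 * Q ≤ ((A + 2 * Q) / Real.sqrt A)^2 := by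
      rw [div_pow, hsA2, le_div_iff₀ hA]
      nlinarith [sq_nonneg Q]
    calc Real.sqrt (A + 4 * Q) ≤ Real.sqrt (((A + 2 * Q) / Real.sqrt A)^2) :=
          Real.sqrt_le_sqrt h3
      _ = (A + 2 * Q) / Real.sqrt A := Real.sqrt_sq (by positivity)
  have hrhs : (1 - s) * Real.sqrt A + (2 * (1 - s) / Real.sqrt A) * Q
      = (1 - s) * ((A + 2 * Q) / Real.sqrt A) := by
    field_simp
    linear_combination (1 - s) * hsA2
  have hmul : (1 - s) * W ≤ (1 - s) * ((A + 2 * Q) / Real.sqrt A) :=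
    mul_le_mul_of_nonneg_left hkey (by linarith)
  have hl : 2 * (l1 + l2 + s * l3) = -(σ + 2 * b + 1) - s * (σ + 1) + (1 - s) * W := by
    rw [hl1, hl2, hl3]; ring
  rw [hl]
  linarith [hmul, hrhs.ge, hrhs.le]
end

section
/- Let σ, b, r be positive reals with σr + (σ−b)(b−1) > 0, r − 1 > 0, r − 1 ≥ (b(b+σ−1)² − 4σ(b+σb−b²))/(3σ²), and suppose either (a) σ²(r−1)(b−4) ≤ 4σ(σb+b−b²) − b(b+σ−1)², or (b) P := b(b+σ−1)² − 4σ(σb+b−b²) + σ²(r−1)(b−4) > 0 and the quadratic equation (2σ−b+γ)²·P + 4bγ(σ+1)·Q = 0, where Q := b(b+σ−1)² − 4σ(σb+b−b²) − 3σ²(r−1), has two distinct real roots whose larger root is positive. Set ρ² = σ²/(σr + (σ−b)(b−1)). Then there exist real numbers γ₁ ≥ 0, γ₂, γ₃, γ₄ such that: 2γ₃ > 2σγ₁ − σγ₁γ₂ + ρ²/4; 2γ₃ ≥ ρ²/(4b) + (γ₁/(4b))(γ₂ + 2σ + b)²; and 2(r−1)γ₃ ≤ 2σγ₁(r−1) +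 γ₁γ₂(r−1) − ρ²(b+σ−1)²/(4σ²) + σ/b. -/
/-!
Choose γ₃ so that the last inequality is an equality. After multiplying by `4b D (r-1)`, where
`D = σr + (σ-b)(b-1)`, the first two inequalities become `P < 4b(σ+1)γ₂ t` and
`(γ₂+2σ-b)² t ≤ -Q` for `t = γ₁ D (r-1) ≥ 0`. The bound on `r - 1` says `Q ≤ 0`, and such a `t`
exists as soon as `f(γ₂) = (2σ-b+γ₂)² P + 4bγ₂(σ+1) Q < 0` for some `γ₂ > 0`. In case (a) `P ≤ 0`
and this holds for every `γ₂ > 0` off the double root of the square; in case (b) `f` is an upward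
parabola, negative strictly between its two roots.
-/

theorem quadratic_neg_of_between {a b c x₁ x₂ x : ℝ} (ha : 0 < a)
    (h₁ : a * x₁^2 + b * x₁ + c = 0) (h₂ : a * x₂^2 + b * x₂ + c = 0)
    (hx₁ : x₁ < x) (hx₂ : x < x₂) :
    a * x^2 + b * x + c < 0 := by
  have key : (a * x^2 + b * x + c) * (x₂ - x₁) = a * (x - x₁) * (x - x₂) * (x₂ - x₁) := by
    linear_combination (x₂ - x) * h₁ + (x - x₁) * h₂
  have hneg : a * (x - x₁) * (x - x₂) * (x₂ - x₁) < 0 :=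
    mul_neg_of_neg_of_pos
      (mul_neg_of_pos_of_neg (mul_pos ha (sub_pos.mpr hx₁)) (sub_neg.mpr hx₂))
      (sub_pos.mpr (hx₁.trans hx₂))
  exact neg_of_mul_neg_left (key ▸ hneg) (sub_pos.mpr (hx₁.trans hx₂)).le

theorem exists_nonneg_lt_mul_and_mul_le {p c s q : ℝ} (hc : 0 < c) (hs : 0 ≤ s) (hq : 0 ≤ q)
    (h : p * s < q * c) : ∃ t ≥ 0, p < c * t ∧ s * t ≤ q := by
  rcases hs.eq_or_lt with rfl | hs
  · refine ⟨max 0 (p / c) + 1, by positivity, ?_, by simpa using hq⟩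
    have : p / c < max 0 (p / c) + 1 := by linarith [le_max_right 0 (p / c)]
    rwa [div_lt_iff₀' hc] at this
  · refine ⟨q / s, by positivity, ?_, (mul_div_cancel₀ q hs.ne').le⟩
    rwa [mul_div_assoc', lt_div_iff₀ hs, mul_comm c]

namespace Lorenz

def P (σ b r : ℝ) : ℝ :=
  b * (b + σ - 1)^2 - 4 * σ * (σ * b + b - b^2) + σ^2 * (r - 1) * (b - 4)

def Q (σ b r : ℝ) : ℝ :=
  b * (b + σ - 1)^2 - 4 * σ * (σ * b + b - b^2) - 3 * σ^2 * (r - 1)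

def quadratic (σ b r γ : ℝ) : ℝ :=
  (2 * σ - b + γ)^2 * P σ b r + 4 * b * γ * (σ + 1) * Q σ b r

variable {σ b r : ℝ}

theorem Q_nonpos (hσ : 0 < σ)
    (h : r - 1 ≥ (b * (b + σ - 1)^2 - 4 * σ * (b + σ * b - b^2)) / (3 * σ^2)) :
    Q σ b r ≤ 0 := by
  rw [ge_iff_le, div_le_iff₀ (by positivity)] at h
  unfold Q
  linarith

theorem P_neg_or_Q_neg (hσ : 0 < σ) (hr : r - 1 > 0) (hP : P σ b r ≤ 0) (hQ : Q σ b r ≤ 0) :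
    P σ b r < 0 ∨ Q σ b r < 0 := by
  by_contra! h
  have hP0 : P σ b r = 0 := le_antisymm hP h.1
  have hQ0 : Q σ b r = 0 := le_antisymm hQ h.2
  have hb : b = 1 := by
    have hPQ : P σ b r - Q σ b r = σ^2 * (r - 1) * (b - 1) := by unfold P Q; ring
    rw [hP0, hQ0, sub_zero, eq_comm] at hPQ
    have := (mul_eq_zero.mp hPQ).resolve_left (by positivity)
    linarith
  have hQr : Q σ b r = -(3 * σ^2 * r) := by unfold Q; rw [hb]; ring
  have : 0 < r := by linarith
  have : 0 < 3 * σ^2 * r := by positivity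
  linarith

theorem exists_pos_quadratic_neg (hσ : 0 < σ) (hb : 0 < b) (hr : r - 1 > 0)
    (hQ : Q σ b r ≤ 0)
    (hab : (σ^2 * (r - 1) * (b - 4) ≤ 4 * σ * (σ * b + b - b^2) - b * (b + σ - 1)^2) ∨
      (0 < P σ b r ∧ ∃ γI γII : ℝ, γI < γII ∧ 0 < γII ∧
        quadratic σ b r γI = 0 ∧ quadratic σ b r γII = 0)) :
    ∃ γ > 0, quadratic σ b r γ < 0 := by
  rcases hab with hP | ⟨hP, γI, γII, hlt, hII, hfI, hfII⟩
  · replace hP : P σ b r ≤ 0 := by unfold P; linarith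
    refine ⟨|b - 2 * σ| + 1, by positivity, ?_⟩
    have hsq : 1 ≤ (2 * σ - b + (|b - 2 * σ| + 1))^2 := by
      nlinarith [le_abs_self (b - 2 * σ)]
    have hc : 0 < 4 * b * (|b - 2 * σ| + 1) * (σ + 1) := by positivity
    unfold quadratic
    rcases P_neg_or_Q_neg hσ hr hP hQ with hP' | hQ'
    · nlinarith [mul_nonpos_of_nonneg_of_nonpos hc.le hQ]
    · nlinarith [mul_nonpos_of_nonneg_of_nonpos (zero_le_one.trans hsq) hP]
  · have hexpand (γ : ℝ) : quadratic σ b r γ = P σ b r * γ^2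
        + (2 * (2 * σ - b) * P σ b r + 4 * b * (σ + 1) * Q σ b r) * γ
        + (2 * σ - b)^2 * P σ b r := by
      unfold quadratic; ring
    refine ⟨(max γI 0 + γII) / 2, by linarith [le_max_right γI 0], ?_⟩
    rw [hexpand] at hfI hfII ⊢
    exact quadratic_neg_of_between hP hfI hfII (by linarith [le_max_left γI 0])
      (by linarith [max_lt hlt hII])

theorem exists_gammas_of_scaled_bounds (hσ : 0 < σ) (hb : 0 < b)
    (hD : σ * r + (σ - b) * (b - 1) > 0) (hr : r - 1 > 0)
    {ρsq : ℝ} (hρ : ρsq = σ^2 / (σ * r + (σ - b) * (b - 1)))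
    {γ₂ t : ℝ} (ht : 0 ≤ t) (hPt : P σ b r < 4 * b * (σ + 1) * γ₂ * t)
    (hQt : (γ₂ + 2 * σ - b)^2 * t ≤ -Q σ b r) :
    ∃ γ₁ γ₃ : ℝ, γ₁ ≥ 0 ∧
      2 * γ₃ > 2 * σ * γ₁ - σ * γ₁ * γ₂ + ρsq / 4 ∧
      2 * γ₃ ≥ ρsq / (4 * b) + (γ₁ / (4 * b)) * (γ₂ + 2 * σ + b)^2 ∧
      2 * (r - 1) * γ₃ ≤ 2 * σ * γ₁ * (r - 1) + γ₁ * γ₂ * (r - 1)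
          - ρsq * (b + σ - 1)^2 / (4 * σ^2) + σ / b := by
  set D := σ * r + (σ - b) * (b - 1)
  set γ₁ := t / (D * (r - 1)) with hγ₁
  set γ₃ := (γ₁ * (2 * σ + γ₂) + (σ / b - ρsq * (b + σ - 1)^2 / (4 * σ^2)) / (r - 1)) / 2
    with hγ₃
  have hden : 0 < 4 * b * D * (r - 1) := by positivity
  refine ⟨γ₁, γ₃, by positivity, ?_, ?_, le_of_eq ?_⟩
  · have e : 2 * γ₃ - (2 * σ * γ₁ - σ * γ₁ * γ₂ + ρsq / 4)
        = (4 * b * (σ + 1) * γ₂ * t - P σ b r) / (4 * b * D * (r - 1)) := by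
      unfold P; rw [hγ₃, hγ₁, hρ]; field_simp; ring
    have : 0 < (4 * b * (σ + 1) * γ₂ * t - P σ b r) / (4 * b * D * (r - 1)) :=
      div_pos (by linarith) hden
    linarith
  · have e : 2 * γ₃ - (ρsq / (4 * b) + (γ₁ / (4 * b)) * (γ₂ + 2 * σ + b)^2)
        = (-Q σ b r - (γ₂ + 2 * σ - b)^2 * t) / (4 * b * D * (r - 1)) := by
      unfold Q; rw [hγ₃, hγ₁, hρ]; field_simp; ring
    have : 0 ≤ (-Q σ b r - (γ₂ + 2 * σ - b)^2 * t) / (4 * b * D * (r - 1)) :=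
      div_nonneg (by linarith) hden.le
    linarith
  · rw [hγ₃]; field_simp; ring

end Lorenz

open Lorenz in
theorem stmt_15_general (σ b r : ℝ) (hσ : 0 < σ) (hb : 0 < b)
    (hpos : σ * r + (σ - b) * (b - 1) > 0)
    (h1 : r - 1 > 0)
    (h2 : r - 1 ≥ (b * (b + σ - 1)^2 - 4 * σ * (b + σ * b - b^2)) / (3 * σ^2))
    (hab :
      (σ^2 * (r - 1) * (b - 4) ≤ 4 * σ * (σ * b + b - b^2) - b * (b + σ - 1)^2) ∨
      (0 < b * (b + σ - 1)^2 - 4 * σ * (σ * b + b - b^2) + σ^2 * (r - 1) * (b - 4) ∧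
        ∃ γI γII : ℝ, γI < γII ∧ 0 < γII ∧
          (2 * σ - b + γI)^2 *
              (b * (b + σ - 1)^2 - 4 * σ * (σ * b + b - b^2) + σ^2 * (r - 1) * (b - 4)) +
            4 * b * γI * (σ + 1) *
              (b * (b + σ - 1)^2 - 4 * σ * (σ * b + b - b^2) - 3 * σ^2 * (r - 1)) = 0 ∧
          (2 * σ - b + γII)^2 *
              (b * (b + σ - 1)^2 - 4 * σ * (σ * b + b - b^2) + σ^2 * (r - 1) * (b - 4)) +
            4 * b * γII * (σ + 1) *
              (b * (b + σ - 1)^2 - 4 * σ * (σ * b + b - b^2) - 3 * σ^2 * (r - 1)) = 0))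
    (ρsq : ℝ) (hρ : ρsq = σ^2 / (σ * r + (σ - b) * (b - 1))) :
    ∃ γ₁ γ₂ γ₃ γ₄ : ℝ, γ₁ ≥ 0 ∧
      2 * γ₃ > 2 * σ * γ₁ - σ * γ₁ * γ₂ + ρsq / 4 ∧
      2 * γ₃ ≥ ρsq / (4 * b) + (γ₁ / (4 * b)) * (γ₂ + 2 * σ + b)^2 ∧
      2 * (r - 1) * γ₃ ≤ 2 * σ * γ₁ * (r - 1) + γ₁ * γ₂ * (r - 1)
          - ρsq * (b + σ - 1)^2 / (4 * σ^2) + σ / b := by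
  have hQ := Q_nonpos hσ h2
  obtain ⟨γ₂, hγ₂, hf⟩ := exists_pos_quadratic_neg hσ hb h1 hQ hab
  obtain ⟨t, ht, hPt, hQt⟩ := exists_nonneg_lt_mul_and_mul_le (p := P σ b r)
    (c := 4 * b * (σ + 1) * γ₂) (s := (γ₂ + 2 * σ - b)^2) (by positivity) (sq_nonneg _)
    (neg_nonneg.mpr hQ) (by unfold quadratic at hf; linear_combination hf)
  obtain ⟨γ₁, γ₃, hγ⟩ := exists_gammas_of_scaled_bounds hσ hb hpos h1 hρ ht hPt hQt
  exact ⟨γ₁, γ₂, γ₃, 0, hγ⟩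

theorem stmt_15 (σ b r : ℝ) (hσ : 0 < σ) (hb : 0 < b) (hr : 0 < r)
    (hpos : σ * r + (σ - b) * (b - 1) > 0)
    (h1 : r - 1 > 0)
    (h2 : r - 1 ≥ (b * (b + σ - 1)^2 - 4 * σ * (b + σ * b - b^2)) / (3 * σ^2))
    (hab :
      (σ^2 * (r - 1) * (b - 4) ≤ 4 * σ * (σ * b + b - b^2) - b * (b + σ - 1)^2) ∨
      (0 < b * (b + σ - 1)^2 - 4 * σ * (σ * b + b - b^2) + σ^2 * (r - 1) * (b - 4) ∧
        ∃ γI γII : ℝ, γI < γII ∧ 0 < γII ∧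
          (2 * σ - b + γI)^2 *
              (b * (b + σ - 1)^2 - 4 * σ * (σ * b + b - b^2) + σ^2 * (r - 1) * (b - 4)) +
            4 * b * γI * (σ + 1) *
              (b * (b + σ - 1)^2 - 4 * σ * (σ * b + b - b^2) - 3 * σ^2 * (r - 1)) = 0 ∧
          (2 * σ - b + γII)^2 *
              (b * (b + σ - 1)^2 - 4 * σ * (σ * b + b - b^2) + σ^2 * (r - 1) * (b - 4)) +
            4 * b * γII * (σ + 1) *
              (b * (b + σ - 1)^2 - 4 * σ * (σ * b + b - b^2) - 3 * σ^2 * (r - 1)) = 0))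
    (ρsq : ℝ) (hρ : ρsq = σ^2 / (σ * r + (σ - b) * (b - 1))) :
    ∃ γ₁ γ₂ γ₃ γ₄ : ℝ, γ₁ ≥ 0 ∧
      2 * γ₃ > 2 * σ * γ₁ - σ * γ₁ * γ₂ + ρsq / 4 ∧
      2 * γ₃ ≥ ρsq / (4 * b) + (γ₁ / (4 * b)) * (γ₂ + 2 * σ + b)^2 ∧
      2 * (r - 1) * γ₃ ≤ 2 * σ * γ₁ * (r - 1) + γ₁ * γ₂ * (r - 1)
          - ρsq * (b + σ - 1)^2 / (4 * σ^2) + σ / b :=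
  stmt_15_general σ b r hσ hb hpos h1 h2 hab ρsq hρ
end
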